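/- arXiv:2008.04593 — 4 statements merged into one kernel-verified Lean document; each statement's English description precedes it below -/
import Mathlib

section
/- Let C be a permutation class of bounded horizontal path-width. Then there is a constant α (depending only on C) such that for every π ∈ C and every subset S of the points of π with intv_x(S) = k, we have intv_y(S) ≤ α·k. -/
namespace PPM

noncomputable section

/-- Intervalicity: minimum number of pairwise disjoint integer intervals covering `A`. -/
def intervalicity {n : ℕ} (A : Finset (Fin n)) : ℕ :=
  sInf {m | ∃ F : Finset (Finset (Fin n)), F.card = m ∧
    (∀ I ∈ F, ∃ a b : Fin n, I = Finset.Icc a b) ∧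
    (F : Set (Finset (Fin n))).PairwiseDisjoint id ∧
    F.sup id = A}

/-- Grid-complexity of a point set. -/
def gridComplexity {n : ℕ} (S : Finset (Fin n × Fin n)) : ℕ :=
  max (intervalicity (S.image Prod.fst)) (intervalicity (S.image Prod.snd))

/-- The diagram of a permutation. -/
def diagram {n : ℕ} (π : Equiv.Perm (Fin n)) : Finset (Fin n × Fin n) :=
  Finset.univ.image (fun i => (i, π i))

/-- Rooted binary trees with labeled leaves. -/
inductive GTree (α : Type) where
  | leaf : α → GTree α
  | node : GTree α → GTree α → GTree α

namespace GTree
variable {α : Type}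

def leafList : GTree α → List α
  | leaf a => [a]
  | node l r => l.leafList ++ r.leafList

def subtrees : GTree α → List (GTree α)
  | leaf a => [leaf a]
  | node l r => node l r :: (l.subtrees ++ r.subtrees)

def IsCaterpillar : GTree α → Prop
  | leaf _ => True
  | node l r => ((∃ a, l = leaf a) ∨ (∃ a, r = leaf a)) ∧ IsCaterpillar l ∧ IsCaterpillar r

def leafDepth [DecidableEq α] : GTree α → α → ℕ
  | leaf _, _ => 0
  | node l r, a => if a ∈ l.leafList then l.leafDepth a + 1 else r.leafDepth a + 1

end GTree

/-- Grid-width of a grid tree. -/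
def treeGW {n : ℕ} (T : GTree (Fin n × Fin n)) : ℕ :=
  (T.subtrees.map (fun t => gridComplexity t.leafList.toFinset)).foldr max 0

/-- `T` is a grid tree of `π`: its leaves are labeled bijectively by the points of `π`. -/
def IsGridTree {n : ℕ} (π : Equiv.Perm (Fin n)) (T : GTree (Fin n × Fin n)) : Prop :=
  T.leafList.Nodup ∧ T.leafList.toFinset = diagram π

/-- Grid-width of a permutation. -/
def gw {n : ℕ} (π : Equiv.Perm (Fin n)) : ℕ :=
  sInf {w | ∃ T, IsGridTree π T ∧ treeGW T = w}

/-- Path-width of a permutation: minimum over caterpillar grid trees. -/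
def pw {n : ℕ} (π : Equiv.Perm (Fin n)) : ℕ :=
  sInf {w | ∃ T, IsGridTree π T ∧ T.IsCaterpillar ∧ treeGW T = w}

/-- The `i`-th prefix point set of `π` in `σ`-ordering. -/
def prefixSet {n : ℕ} (π σ : Equiv.Perm (Fin n)) (i : Fin n) : Finset (Fin n × Fin n) :=
  (Finset.univ.filter (fun j => j ≤ i)).image (fun j => (σ j, π (σ j)))

/-- Path-width of `π` in `σ`-ordering. -/
def pwOrd {n : ℕ} (π σ : Equiv.Perm (Fin n)) : ℕ :=
  Finset.univ.sup (fun i => gridComplexity (prefixSet π σ i))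

/-- Horizontal path-width: `σ` is the identity (left-to-right order). -/
def hpw {n : ℕ} (π : Equiv.Perm (Fin n)) : ℕ := pwOrd π 1

/-- Vertical path-width: `σ = π⁻¹` (bottom-to-top order). -/
def vpw {n : ℕ} (π : Equiv.Perm (Fin n)) : ℕ := pwOrd π π⁻¹

/-- Pattern containment: `τ` contains `π`. -/
def Contains {n k : ℕ} (τ : Equiv.Perm (Fin n)) (π : Equiv.Perm (Fin k)) : Prop :=
  ∃ f : Fin k → Fin n, StrictMono f ∧ ∀ i j, π i < π j ↔ τ (f i) < τ (f j)

/-- A permutation class, given by its members of each length. -/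
abbrev PermClass := ∀ n : ℕ, Set (Equiv.Perm (Fin n))

/-- Closure under pattern containment. -/
def IsPermClass (C : PermClass) : Prop :=
  ∀ {n k : ℕ} (τ : Equiv.Perm (Fin n)) (π : Equiv.Perm (Fin k)),
    τ ∈ C n → Contains τ π → π ∈ C k

/-- `π` is griddable by the monotone gridding matrix `M`
(`some true` = Inc, `some false` = Dec, `none` = empty);
columns are the first index, rows the second. -/
def MonGriddable {n k l : ℕ} (M : Fin k → Fin l → Option Bool)
    (π : Equiv.Perm (Fin n)) : Prop :=
  ∃ (c : Fin n → Fin k) (r : Fin n → Fin l), Monotone c ∧ Monotone r ∧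
    (∀ i : Fin n, (M (c i) (r (π i))).isSome) ∧
    (∀ i j : Fin n, i < j → c i = c j → r (π i) = r (π j) →
      ∀ b, M (c i) (r (π i)) = some b → (if b then π i < π j else π j < π i))

/-- Adjacency of cells in the cell graph of a monotone gridding matrix:
both cells nonempty, sharing a row or a column, with only empty cells in between. -/
def MonCellAdj {k l : ℕ} (M : Fin k → Fin l → Option Bool)
    (p q : Fin k × Fin l) : Prop :=
  (M p.1 p.2).isSome ∧ (M q.1 q.2).isSome ∧
  ((p.1 = q.1 ∧ p.2 ≠ q.2 ∧ ∀ j : Fin l,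
      ((p.2 < j ∧ j < q.2) ∨ (q.2 < j ∧ j < p.2)) → M p.1 j = Option.none) ∨
   (p.2 = q.2 ∧ p.1 ≠ q.1 ∧ ∀ i : Fin k,
      ((p.1 < i ∧ i < q.1) ∨ (q.1 < i ∧ i < p.1)) → M i p.2 = Option.none))

/-- The cell graph of a monotone gridding matrix. -/
def monCellGraph {k l : ℕ} (M : Fin k → Fin l → Option Bool) :
    SimpleGraph (Fin k × Fin l) :=
  SimpleGraph.fromRel (MonCellAdj M)

/-- A consistent orientation of a monotone gridding matrix, signs coded by `Bool`. -/
def ConsistentOrientation {k l : ℕ} (M : Fin k → Fin l → Option Bool)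
    (c : Fin k → Bool) (r : Fin l → Bool) : Prop :=
  ∀ i j, (M i j = some true → c i = r j) ∧ (M i j = some false → c i ≠ r j)

/-- The refinement `M^{×q}` of a monotone gridding matrix. -/
def refine {k l : ℕ} (M : Fin k → Fin l → Option Bool) (q : ℕ) :
    Fin (q * k) → Fin (q * l) → Option Bool :=
  fun i j =>
    match M ⟨i.val / q, Nat.div_lt_of_lt_mul i.isLt⟩
            ⟨j.val / q, Nat.div_lt_of_lt_mul j.isLt⟩ with
    | some true => if i.val % q = j.val % q then some true else none
    | some false => if i.val % q + j.val % q = q - 1 then some false else none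
    | none => none

/-- The restriction of `π` to the position set `P` is order-isomorphic to a member of `C`. -/
def CellPattern {n : ℕ} (π : Equiv.Perm (Fin n)) (P : Finset (Fin n))
    (C : PermClass) : Prop :=
  ∃ m : ℕ, ∃ σ ∈ C m, ∃ f : Fin m → Fin n, StrictMono f ∧
    Finset.univ.image f = P ∧ ∀ i j, σ i < σ j ↔ π (f i) < π (f j)

/-- `π` is griddable by a gridding matrix with permutation-class entries. -/
def GenGriddable {n k l : ℕ} (M : Fin k → Fin l → PermClass)
    (π : Equiv.Perm (Fin n)) : Prop :=
  ∃ (c : Fin n → Fin k) (r : Fin n → Fin l), Monotone c ∧ Monotone r ∧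
    ∀ (a : Fin k) (b : Fin l),
      (Finset.univ.filter (fun i => c i = a ∧ r (π i) = b) = ∅) ∨
      CellPattern π (Finset.univ.filter (fun i => c i = a ∧ r (π i) = b)) (M a b)

/-- A class containing some nonempty permutation. -/
def ClassNonempty (C : PermClass) : Prop := ∃ n, 0 < n ∧ (C n).Nonempty

/-- An infinite class: members of arbitrarily large lengths. -/
def ClassInfinite (C : PermClass) : Prop := ∀ m, ∃ n, m ≤ n ∧ (C n).Nonempty

/-- Cell adjacency for a general gridding matrix. -/
def GenCellAdj {k l : ℕ} (M : Fin k → Fin l → PermClass)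
    (p q : Fin k × Fin l) : Prop :=
  ClassNonempty (M p.1 p.2) ∧ ClassNonempty (M q.1 q.2) ∧
  ((p.1 = q.1 ∧ p.2 ≠ q.2 ∧ ∀ j : Fin l,
      ((p.2 < j ∧ j < q.2) ∨ (q.2 < j ∧ j < p.2)) → ¬ ClassNonempty (M p.1 j)) ∨
   (p.2 = q.2 ∧ p.1 ≠ q.1 ∧ ∀ i : Fin k,
      ((p.1 < i ∧ i < q.1) ∨ (q.1 < i ∧ i < p.1)) → ¬ ClassNonempty (M i p.2)))

/-- The cell graph of a general gridding matrix. -/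
def genCellGraph {k l : ℕ} (M : Fin k → Fin l → PermClass) :
    SimpleGraph (Fin k × Fin l) :=
  SimpleGraph.fromRel (GenCellAdj M)

/-- Unbounded horizontal path-width of a class. -/
def UnboundedHPW (C : PermClass) : Prop := ∀ K, ∃ n, ∃ π ∈ C n, K < hpw π

/-- Unbounded vertical path-width of a class. -/
def UnboundedVPW (C : PermClass) : Prop := ∀ K, ∃ n, ∃ π ∈ C n, K < vpw π

/-- `(p, q)` is a bumper. -/
def Bumper {k l : ℕ} (M : Fin k → Fin l → PermClass) (p q : Fin k × Fin l) : Prop :=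
  (UnboundedHPW (M q.1 q.2) ∧ p.1 = q.1) ∨ (UnboundedVPW (M q.1 q.2) ∧ p.2 = q.2)

/-- The cell graph of `M` contains a bumper-ended path. -/
def HasBumperEndedPath {k l : ℕ} (M : Fin k → Fin l → PermClass) : Prop :=
  ∃ (L : List (Fin k × Fin l)) (h : 2 ≤ L.length),
    List.Chain' (genCellGraph M).Adj L ∧ L.Nodup ∧
    Bumper M (L.get ⟨1, by omega⟩) (L.get ⟨0, by omega⟩) ∧
    Bumper M (L.get ⟨L.length - 2, by omega⟩) (L.get ⟨L.length - 1, by omega⟩)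

/-- Horizontal alternation: all even entries (1-based values) precede all odd entries. -/
def IsHorizAlt {n : ℕ} (π : Equiv.Perm (Fin n)) : Prop :=
  ∀ i j : Fin n, i < j → ¬(Odd ((π i).val + 1) ∧ Even ((π j).val + 1))

/-- `σ` is monotone on the positions satisfying `P`. -/
def MonOn {n : ℕ} (σ : Equiv.Perm (Fin n)) (P : Fin n → Prop) : Prop :=
  (∀ i j, i < j → P i → P j → σ i < σ j) ∨ (∀ i j, i < j → P i → P j → σ j < σ i)

/-- Monotone horizontal alternation. -/
def IsMonHorizAlt {n : ℕ} (σ : Equiv.Perm (Fin n)) : Prop :=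
  IsHorizAlt σ ∧ MonOn σ (fun i => Odd ((σ i).val + 1)) ∧
    MonOn σ (fun i => Even ((σ i).val + 1))

/-- The 1×2 horizontal monotone juxtaposition matrix. -/
def juxH (b₁ b₂ : Bool) : Fin 2 → Fin 1 → Option Bool :=
  fun i _ => some (if i = 0 then b₁ else b₂)

/-- No three consecutive cells of the list share a row or a column. -/
def ProperTurning {k l : ℕ} (L : List (Fin k × Fin l)) : Prop :=
  ∀ a b c : Fin k × Fin l, [a, b, c] <:+: L →
    ¬(a.1 = b.1 ∧ b.1 = c.1) ∧ ¬(a.2 = b.2 ∧ b.2 = c.2)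

/-- The class of increasing (`true`) or decreasing (`false`) permutations. -/
def monClass (b : Bool) : PermClass :=
  fun n => {π | ∀ i j : Fin n, i < j → (if b then π i < π j else π j < π i)}

end

end PPM

open PPM

/-! The `y`-projection of `S` is `π` applied to its `x`-projection `A`, which is a disjoint union
of `intv_x(S)` intervals. For an interval of positions, `π [a, b] = π [0, b] \ π [0, a)` is a
difference of two images of prefixes, each of intervalicity at most `hpw π`. Intervalicity is the
number of left endpoints of the maximal runs of a set, and a left endpoint of `A \ B` is either a
left endpoint of `A` or the successor of a right endpoint of `B`; so
`intv (A \ B) ≤ intv A + intv B`, and `α = 2 B` works for a bound `B` on the horizontal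
path-width.
-/

namespace PPM

open Finset

section Endpoints

variable {α : Type*} [LinearOrder α] {A I : Finset α} {a : α}

open Classical in
noncomputable def leftEndpoints (A : Finset α) : Finset α :=
  {a ∈ A | ∀ b ∈ A, ¬b ⋖ a}

open Classical in
noncomputable def rightEndpoints (A : Finset α) : Finset α :=
  {a ∈ A | ∀ b ∈ A, ¬a ⋖ b}

theorem mem_leftEndpoints : a ∈ leftEndpoints A ↔ a ∈ A ∧ ∀ b ∈ A, ¬b ⋖ a := by
  classical
  simp only [leftEndpoints, mem_filter]

theorem mem_rightEndpoints : a ∈ rightEndpoints A ↔ a ∈ A ∧ ∀ b ∈ A, ¬a ⋖ b := by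
  classical
  simp only [rightEndpoints, mem_filter]

theorem mem_leftEndpoints_of_subset (hIA : I ⊆ A) (ha : a ∈ I) (hA : a ∈ leftEndpoints A) :
    a ∈ leftEndpoints I :=
  mem_leftEndpoints.2 ⟨ha, fun b hb => (mem_leftEndpoints.1 hA).2 b (hIA hb)⟩

theorem mem_rightEndpoints_of_subset (hIA : I ⊆ A) (ha : a ∈ I) (hA : a ∈ rightEndpoints A) :
    a ∈ rightEndpoints I :=
  mem_rightEndpoints.2 ⟨ha, fun b hb => (mem_rightEndpoints.1 hA).2 b (hIA hb)⟩

theorem leftEndpoints_biUnion_subset {ι : Type*} (s : Finset ι) (f : ι → Finset α) :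
    leftEndpoints (s.biUnion f) ⊆ s.biUnion fun i => leftEndpoints (f i) := by
  intro a ha
  obtain ⟨i, hi, hai⟩ := mem_biUnion.1 (mem_leftEndpoints.1 ha).1
  exact mem_biUnion.2 ⟨i, hi, mem_leftEndpoints_of_subset (subset_biUnion_of_mem f hi) hai ha⟩

theorem rightEndpoints_biUnion_subset {ι : Type*} (s : Finset ι) (f : ι → Finset α) :
    rightEndpoints (s.biUnion f) ⊆ s.biUnion fun i => rightEndpoints (f i) := by
  intro a ha
  obtain ⟨i, hi, hai⟩ := mem_biUnion.1 (mem_rightEndpoints.1 ha).1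
  exact mem_biUnion.2 ⟨i, hi, mem_rightEndpoints_of_subset (subset_biUnion_of_mem f hi) hai ha⟩

theorem leftEndpoints_Icc_subset [LocallyFiniteOrder α] [IsStronglyCoatomic α] (a b : α) :
    leftEndpoints (Icc a b) ⊆ {a} := by
  intro x hx
  obtain ⟨hxI, hxmin⟩ := mem_leftEndpoints.1 hx
  obtain ⟨hax, hxb⟩ := mem_Icc.1 hxI
  refine mem_singleton.2 (hax.eq_or_lt.resolve_right fun hlt => ?_).symm
  obtain ⟨y, hay, hyx⟩ := exists_le_covBy_of_lt hlt
  exact hxmin y (mem_Icc.2 ⟨hay, hyx.le.trans hxb⟩) hyx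

theorem rightEndpoints_Icc_subset [LocallyFiniteOrder α] [IsStronglyAtomic α] (a b : α) :
    rightEndpoints (Icc a b) ⊆ {b} := by
  intro x hx
  obtain ⟨hxI, hxmax⟩ := mem_rightEndpoints.1 hx
  obtain ⟨hax, hxb⟩ := mem_Icc.1 hxI
  refine mem_singleton.2 (hxb.eq_or_lt.resolve_right fun hlt => ?_)
  obtain ⟨y, hxy, hyb⟩ := exists_covBy_le_of_lt hlt
  exact hxmax y (mem_Icc.2 ⟨hax.trans hxy.le, hyb⟩) hxy

theorem leftEndpoints_sdiff_subset [SuccOrder α] (A B : Finset α) :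
    leftEndpoints (A \ B) ⊆ leftEndpoints A ∪ (rightEndpoints B).image Order.succ := by
  intro a ha
  obtain ⟨haAB, hamin⟩ := mem_leftEndpoints.1 ha
  obtain ⟨haA, haB⟩ := mem_sdiff.1 haAB
  by_cases hA : a ∈ leftEndpoints A
  · exact mem_union_left _ hA
  obtain ⟨b, hbA, hba⟩ : ∃ b ∈ A, b ⋖ a := by
    simpa [mem_leftEndpoints, haA] using hA
  have hbB : b ∈ B := by
    by_contra hbB
    exact hamin b (mem_sdiff.2 ⟨hbA, hbB⟩) hba
  have hb : b ∈ rightEndpoints B :=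
    mem_rightEndpoints.2 ⟨hbB, fun c hc hbc => haB (hba.unique_right hbc ▸ hc)⟩
  exact mem_union_right _ (mem_image.2 ⟨b, hb, hba.succ_eq⟩)

end Endpoints

section Runs

variable {α : Type*} [LinearOrder α] {A : Finset α} {a b : α}

noncomputable def run (A : Finset α) (a : α) : Finset α :=
  (A.finite_toSet.subset (Set.ordConnectedComponent_subset (x := a))).toFinset

theorem coe_run : (run A a : Set α) = Set.ordConnectedComponent A a :=
  Set.Finite.coe_toFinset _

theorem mem_run : b ∈ run A a ↔ Set.uIcc a b ⊆ A :=
  Set.Finite.mem_toFinset _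

theorem run_subset : run A a ⊆ A := by
  rw [← coe_subset, coe_run]
  exact Set.ordConnectedComponent_subset

theorem self_mem_run (ha : a ∈ A) : a ∈ run A a := by
  rw [mem_run, Set.uIcc_self, Set.singleton_subset_iff]
  exact ha

theorem run_eq_of_mem (h : b ∈ run A a) : run A a = run A b :=
  coe_injective <| by rw [coe_run, coe_run]; exact Set.ordConnectedComponent_eq (mem_run.1 h)

theorem run_eq_Icc [LocallyFiniteOrder α] (ha : a ∈ A) : ∃ c d, run A a = Icc c d := by
  have hne : (run A a).Nonempty := ⟨a, self_mem_run ha⟩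
  refine ⟨(run A a).min' hne, (run A a).max' hne,
    coe_injective (Set.Subset.antisymm (fun x hx => ?_) ?_)⟩
  · rw [coe_Icc]
    exact ⟨min'_le _ _ hx, le_max' _ _ hx⟩
  · rw [coe_Icc, coe_run]
    exact Set.OrdConnected.out inferInstance
      (coe_run (A := A) ▸ min'_mem _ hne) (coe_run (A := A) ▸ max'_mem _ hne)

theorem min'_run_mem_leftEndpoints (ha : a ∈ A) :
    (run A a).min' ⟨a, self_mem_run ha⟩ ∈ leftEndpoints A := by
  set m := (run A a).min' ⟨a, self_mem_run ha⟩
  have hm : m ∈ run A a := min'_mem _ _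
  refine mem_leftEndpoints.2 ⟨run_subset hm, fun b hb hbm => ?_⟩
  have hbrun : b ∈ run A a := by
    rw [run_eq_of_mem hm, mem_run, Set.uIcc_of_ge hbm.le, hbm.Icc_eq, Set.insert_subset_iff,
      Set.singleton_subset_iff]
    exact ⟨hb, run_subset hm⟩
  exact (min'_le _ _ hbrun).not_gt hbm.lt

theorem biUnion_run_leftEndpoints (A : Finset α) : (leftEndpoints A).biUnion (run A) = A := by
  refine Subset.antisymm (biUnion_subset.2 fun _ _ => run_subset) fun x hx => ?_
  refine mem_biUnion.2 ⟨_, min'_run_mem_leftEndpoints hx, ?_⟩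
  rw [← run_eq_of_mem (min'_mem (run A x) ⟨x, self_mem_run hx⟩)]
  exact self_mem_run hx

theorem run_eq_or_disjoint (A : Finset α) (a b : α) :
    run A a = run A b ∨ Disjoint (run A a) (run A b) := by
  refine or_iff_not_imp_right.2 fun h => ?_
  obtain ⟨c, hca, hcb⟩ := not_disjoint_iff.1 h
  exact (run_eq_of_mem hca).trans (run_eq_of_mem hcb).symm

end Runs

section IntervalCover

variable {α : Type*} [LinearOrder α] [LocallyFiniteOrder α]
  {F : Finset (Finset α)} {A : Finset α}

def IsIntervalCover (F : Finset (Finset α)) (A : Finset α) : Prop :=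
  (∀ I ∈ F, ∃ a b, I = Icc a b) ∧ (F : Set (Finset α)).PairwiseDisjoint id ∧ F.sup id = A

theorem isIntervalCover_run (A : Finset α) :
    IsIntervalCover ((leftEndpoints A).image (run A)) A := by
  refine ⟨?_, ?_, ?_⟩
  · simp only [mem_image, forall_exists_index, and_imp, forall_apply_eq_imp_iff₂]
    exact fun a ha => run_eq_Icc (mem_leftEndpoints.1 ha).1
  · simp only [coe_image]
    rintro _ ⟨a, -, rfl⟩ _ ⟨b, -, rfl⟩ hab
    exact (run_eq_or_disjoint A a b).resolve_left hab
  · rw [sup_image, Function.id_comp, sup_eq_biUnion, biUnion_run_leftEndpoints]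

theorem card_leftEndpoints_le_of_isIntervalCover [IsStronglyCoatomic α]
    (h : IsIntervalCover F A) : #(leftEndpoints A) ≤ #F := by
  obtain ⟨hIcc, -, rfl⟩ := h
  calc #(leftEndpoints (F.sup id))
      ≤ #(F.biUnion leftEndpoints) := by
        rw [sup_eq_biUnion]
        exact card_le_card (leftEndpoints_biUnion_subset F id)
    _ ≤ ∑ I ∈ F, #(leftEndpoints I) := card_biUnion_le
    _ ≤ ∑ _I ∈ F, 1 := sum_le_sum fun I hI => by
        obtain ⟨a, b, rfl⟩ := hIcc I hI
        exact (card_le_card (leftEndpoints_Icc_subset a b)).trans_eq (card_singleton a)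
    _ = #F := (card_eq_sum_ones F).symm

theorem card_rightEndpoints_le_of_isIntervalCover [IsStronglyAtomic α]
    (h : IsIntervalCover F A) : #(rightEndpoints A) ≤ #F := by
  obtain ⟨hIcc, -, rfl⟩ := h
  calc #(rightEndpoints (F.sup id))
      ≤ #(F.biUnion rightEndpoints) := by
        rw [sup_eq_biUnion]
        exact card_le_card (rightEndpoints_biUnion_subset F id)
    _ ≤ ∑ I ∈ F, #(rightEndpoints I) := card_biUnion_le
    _ ≤ ∑ _I ∈ F, 1 := sum_le_sum fun I hI => by
        obtain ⟨a, b, rfl⟩ := hIcc I hI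
        exact (card_le_card (rightEndpoints_Icc_subset a b)).trans_eq (card_singleton b)
    _ = #F := (card_eq_sum_ones F).symm

end IntervalCover

section Intervalicity

variable {n : ℕ}

theorem intervalicity_le_card {F : Finset (Finset (Fin n))} {A : Finset (Fin n)}
    (h : IsIntervalCover F A) : intervalicity A ≤ #F :=
  Nat.sInf_le ⟨F, rfl, h⟩

theorem exists_isIntervalCover_card_eq (A : Finset (Fin n)) :
    ∃ F, IsIntervalCover F A ∧ #F = intervalicity A := by
  obtain ⟨F, hF, h⟩ : intervalicity A ∈ _ :=
    Nat.sInf_mem ⟨_, _, rfl, isIntervalCover_run A⟩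
  exact ⟨F, h, hF⟩

theorem intervalicity_eq_card_leftEndpoints (A : Finset (Fin n)) :
    intervalicity A = #(leftEndpoints A) := by
  refine le_antisymm ((intervalicity_le_card (isIntervalCover_run A)).trans card_image_le) ?_
  obtain ⟨F, hF, hcard⟩ := exists_isIntervalCover_card_eq A
  exact hcard ▸ card_leftEndpoints_le_of_isIntervalCover hF

theorem card_rightEndpoints_le_intervalicity (A : Finset (Fin n)) :
    #(rightEndpoints A) ≤ intervalicity A := by
  obtain ⟨F, hF, hcard⟩ := exists_isIntervalCover_card_eq A
  exact hcard ▸ card_rightEndpoints_le_of_isIntervalCover hF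

theorem intervalicity_biUnion_le {ι : Type*} (s : Finset ι) (f : ι → Finset (Fin n)) :
    intervalicity (s.biUnion f) ≤ ∑ i ∈ s, intervalicity (f i) := by
  simp only [intervalicity_eq_card_leftEndpoints]
  exact (card_le_card (leftEndpoints_biUnion_subset s f)).trans card_biUnion_le

theorem intervalicity_sdiff_le (A B : Finset (Fin n)) :
    intervalicity (A \ B) ≤ intervalicity A + intervalicity B := by
  calc intervalicity (A \ B)
      ≤ #(leftEndpoints A ∪ (rightEndpoints B).image Order.succ) := by
        rw [intervalicity_eq_card_leftEndpoints]
        exact card_le_card (leftEndpoints_sdiff_subset A B)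
    _ ≤ #(leftEndpoints A) + #(rightEndpoints B) :=
        (card_union_le _ _).trans (by grw [card_image_le])
    _ ≤ intervalicity A + intervalicity B := by
        rw [intervalicity_eq_card_leftEndpoints]
        grw [card_rightEndpoints_le_intervalicity]

theorem intervalicity_empty : intervalicity (∅ : Finset (Fin n)) = 0 :=
  Nat.eq_zero_of_le_zero (intervalicity_le_card (F := ∅) ⟨by simp, by simp, rfl⟩)

end Intervalicity

section PathWidth

variable {n : ℕ}

theorem intervalicity_image_Iic_le_hpw (π : Equiv.Perm (Fin n)) (i : Fin n) :
    intervalicity ((Iic i).image π) ≤ hpw π := by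
  have hsnd : (prefixSet π 1 i).image Prod.snd = (Iic i).image π := by
    simp [prefixSet, image_image, Function.comp_def, filter_ge_eq_Iic]
  calc intervalicity ((Iic i).image π)
      ≤ gridComplexity (prefixSet π 1 i) := hsnd ▸ le_max_right _ _
    _ ≤ hpw π := le_sup (f := fun i => gridComplexity (prefixSet π 1 i)) (mem_univ i)

theorem intervalicity_image_Iio_le_hpw (π : Equiv.Perm (Fin n)) (i : Fin n) :
    intervalicity ((Iio i).image π) ≤ hpw π := by
  by_cases hi : IsMin i
  · rw [hi.finsetIio_eq, image_empty, intervalicity_empty]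
    exact Nat.zero_le _
  · rw [← Iic_pred_eq_Iio_of_not_isMin hi]
    exact intervalicity_image_Iic_le_hpw π _

theorem intervalicity_image_Icc_le_two_mul_hpw (π : Equiv.Perm (Fin n)) (a b : Fin n) :
    intervalicity ((Icc a b).image π) ≤ 2 * hpw π := by
  have hIcc : Icc a b = Iic b \ Iio a := by
    ext x
    simp [and_comm]
  rw [hIcc, image_sdiff _ _ π.injective, two_mul]
  exact (intervalicity_sdiff_le _ _).trans
    (add_le_add (intervalicity_image_Iic_le_hpw π b) (intervalicity_image_Iio_le_hpw π a))

end PathWidth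

theorem intervalicity_image_le_mul {n m : ℕ} (f : Fin n → Fin m) (c : ℕ)
    (hf : ∀ a b, intervalicity ((Icc a b).image f) ≤ c) (A : Finset (Fin n)) :
    intervalicity (A.image f) ≤ c * intervalicity A := by
  conv_lhs => rw [← biUnion_run_leftEndpoints A, biUnion_image]
  calc intervalicity ((leftEndpoints A).biUnion fun a => (run A a).image f)
      ≤ ∑ a ∈ leftEndpoints A, intervalicity ((run A a).image f) :=
        intervalicity_biUnion_le _ _
    _ ≤ ∑ _a ∈ leftEndpoints A, c := sum_le_sum fun a ha => by
        obtain ⟨a', b', hab⟩ := run_eq_Icc (mem_leftEndpoints.1 ha).1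
        exact hab ▸ hf a' b'
    _ = c * intervalicity A := by
        rw [sum_const, smul_eq_mul, intervalicity_eq_card_leftEndpoints, mul_comm]

theorem image_snd_eq_image_fst_of_subset_diagram {n : ℕ} {π : Equiv.Perm (Fin n)}
    {S : Finset (Fin n × Fin n)} (hS : S ⊆ diagram π) :
    S.image Prod.snd = (S.image Prod.fst).image π := by
  rw [image_image]
  refine image_congr fun p hp => ?_
  obtain ⟨i, -, rfl⟩ := mem_image.1 (hS hp)
  rfl

end PPM

theorem intv_y_le_of_bounded_hpw_general (C : PermClass)
    (hbdd : ∃ B, ∀ (n : ℕ) (π : Equiv.Perm (Fin n)), π ∈ C n → hpw π ≤ B) :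
    ∃ α : ℕ, ∀ (n : ℕ) (π : Equiv.Perm (Fin n)), π ∈ C n →
      ∀ S : Finset (Fin n × Fin n), S ⊆ diagram π →
      ∀ k : ℕ, intervalicity (S.image Prod.fst) = k →
        intervalicity (S.image Prod.snd) ≤ α * k := by
  obtain ⟨B, hB⟩ := hbdd
  refine ⟨2 * B, fun n π hπ S hS k hk => ?_⟩
  rw [image_snd_eq_image_fst_of_subset_diagram hS, ← hk]
  refine intervalicity_image_le_mul π (2 * B) (fun a b => ?_) _
  exact (intervalicity_image_Icc_le_two_mul_hpw π a b).trans (by grw [hB n π hπ])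

/-- for a class `C` of bounded horizontal path-width there is `α`
such that `intv_y(S) ≤ α · intv_x(S)` for every point subset `S` of any `π ∈ C`. -/
theorem intv_y_le_of_bounded_hpw (C : PermClass) (hC : IsPermClass C)
    (hbdd : ∃ B, ∀ (n : ℕ) (π : Equiv.Perm (Fin n)), π ∈ C n → hpw π ≤ B) :
    ∃ α : ℕ, ∀ (n : ℕ) (π : Equiv.Perm (Fin n)), π ∈ C n →
      ∀ S : Finset (Fin n × Fin n), S ⊆ diagram π →
      ∀ k : ℕ, intervalicity (S.image Prod.fst) = k →
        intervalicity (S.image Prod.snd) ≤ α * k :=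
  intv_y_le_of_bounded_hpw_general C hbdd
end

section
/- If G_M is a tree avoiding bumper-ended paths, then there exists a vertex r of G_M such that for every other vertex q, the (unique) path from r to q does not end in a bumper. -/
open PPM
section Aux

variable {V : Type*}

private lemma exists_walk_of_chain (G : SimpleGraph V) :
    ∀ (L : List V) (u v : V), L.Chain' G.Adj → L.head? = some u → L.getLast? = some v →
      ∃ w : G.Walk u v, w.support = L := by
  intro L
  induction L with
  | nil => intro u v _ hh _; simp at hh
  | cons a t ih =>
    intro u v hc hh hl
    have hau : a = u := by simpa using hh
    subst hau
    cases t with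
    | nil =>
      have hav : a = v := by simpa [List.getLast?] using hl
      subst hav
      exact ⟨SimpleGraph.Walk.nil, rfl⟩
    | cons b t' =>
      have hadj : G.Adj a b := (List.isChain_cons_cons.mp hc).1
      have hc' : (b :: t').Chain' G.Adj := (List.isChain_cons_cons.mp hc).2
      have hl' : (b :: t').getLast? = some v := by
        rw [← hl]; simp [List.getLast?_cons_cons]
      obtain ⟨w, hw⟩ := ih b v hc' rfl hl'
      exact ⟨SimpleGraph.Walk.cons hadj w, by simp [hw]⟩

private lemma tree_path_unique {G : SimpleGraph V} (hT : G.IsTree)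
    {L₁ L₂ : List V} {u v : V}
    (hc₁ : L₁.Chain' G.Adj) (hn₁ : L₁.Nodup) (hh₁ : L₁.head? = some u)
    (hl₁ : L₁.getLast? = some v)
    (hc₂ : L₂.Chain' G.Adj) (hn₂ : L₂.Nodup) (hh₂ : L₂.head? = some u)
    (hl₂ : L₂.getLast? = some v) : L₁ = L₂ := by
  obtain ⟨w₁, hw₁⟩ := exists_walk_of_chain G L₁ u v hc₁ hh₁ hl₁
  obtain ⟨w₂, hw₂⟩ := exists_walk_of_chain G L₂ u v hc₂ hh₂ hl₂
  have hp₁ : w₁.IsPath := (SimpleGraph.Walk.isPath_def _).mpr (hw₁ ▸ hn₁)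
  have hp₂ : w₂.IsPath := (SimpleGraph.Walk.isPath_def _).mpr (hw₂ ▸ hn₂)
  have : w₁ = w₂ := ((hT.existsUnique_path u v).unique hp₁ hp₂)
  rw [← hw₁, ← hw₂, this]

private lemma end_decomp (L : List V) (h : 2 ≤ L.length) :
    ∃ (M : List V) (a b : V), L = M ++ [a, b] := by
  have h1 : L.reverse ≠ [] := by
    simp only [ne_eq, List.reverse_eq_nil_iff]
    intro hL; rw [hL] at h; simp at h
  obtain ⟨b, t1, ht1⟩ := List.exists_cons_of_ne_nil h1
  have h2 : t1 ≠ [] := by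
    intro ht; rw [ht] at ht1
    have := congrArg List.length ht1
    simp at this; omega
  obtain ⟨a, t, ht⟩ := List.exists_cons_of_ne_nil h2
  refine ⟨t.reverse, a, b, ?_⟩
  have := congrArg List.reverse ht1
  rw [List.reverse_reverse, ht] at this
  simpa using this

private lemma getElem_pair₁ (M : List V) (a b : V) (i : ℕ) (hi : i = M.length)
    (h : i < (M ++ [a, b]).length) : (M ++ [a, b])[i] = a := by
  subst hi
  rw [List.getElem_append_right (Nat.le_refl _)]
  simp

private lemma getElem_pair₂ (M : List V) (a b : V) (i : ℕ) (hi : i = M.length + 1)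
    (h : i < (M ++ [a, b]).length) : (M ++ [a, b])[i] = b := by
  subst hi
  rw [List.getElem_append_right (Nat.le_succ_of_le (Nat.le_refl _))]
  simp

private lemma get_end₁ (M : List V) (a b : V) (h : 2 ≤ (M ++ [a, b]).length) :
    (M ++ [a, b]).get ⟨(M ++ [a, b]).length - 2, by omega⟩ = a := by
  rw [List.get_eq_getElem]
  apply getElem_pair₁
  simp

private lemma get_end₂ (M : List V) (a b : V) (h : 2 ≤ (M ++ [a, b]).length) :
    (M ++ [a, b]).get ⟨(M ++ [a, b]).length - 1, by omega⟩ = b := by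
  rw [List.get_eq_getElem]
  apply getElem_pair₂
  simp

end Aux
private lemma end_bumper_decomp {V : Type*} {B : V → V → Prop} (L : List V) (h : 2 ≤ L.length)
    (hb : B (L.get ⟨L.length - 2, Nat.sub_lt (Nat.lt_of_lt_of_le two_pos h) two_pos⟩)
      (L.get ⟨L.length - 1, Nat.sub_lt (Nat.lt_of_lt_of_le two_pos h) one_pos⟩)) :
    ∃ M a b, L = M ++ [a, b] ∧ B a b := by
  obtain ⟨M, a, b, rfl⟩ := end_decomp L h
  exact ⟨M, a, b, rfl, by rwa [get_end₁ M a b h, get_end₂ M a b h] at hb⟩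

/-- in a tree with a set `B` of ordered pairs of adjacent vertices and no
bumper-ended path, there is a vertex `r` such that no path starting at `r` ends in a
pair from `B`. -/
theorem exists_root_no_path_ends_in_bumper {V : Type*} [Fintype V] [DecidableEq V]
    (G : SimpleGraph V) (hT : G.IsTree) (B : V → V → Prop)
    (hB : ∀ p q, B p q → G.Adj p q)
    (hno : ¬ ∃ (L : List V) (h : 2 ≤ L.length), List.Chain' G.Adj L ∧ L.Nodup ∧
      B (L.get ⟨1, by omega⟩) (L.get ⟨0, by omega⟩) ∧
      B (L.get ⟨L.length - 2, by omega⟩) (L.get ⟨L.length - 1, by omega⟩)) :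
    ∃ r : V, ∀ (L : List V) (h : 2 ≤ L.length), List.Chain' G.Adj L → L.Nodup →
      L.head? = some r →
      ¬ B (L.get ⟨L.length - 2, by omega⟩) (L.get ⟨L.length - 1, by omega⟩) := by
  classical
  by_cases hS : ∃ L : List V, List.Chain' G.Adj L ∧ L.Nodup ∧
      ∃ (M : List V) (a b : V), L = M ++ [a, b] ∧ B a b
  case neg =>
    obtain ⟨r⟩ := hT.isConnected.nonempty
    exact ⟨r, fun P hP2 hPc hPn _ hPB => hS ⟨P, hPc, hPn, end_bumper_decomp P hP2 hPB⟩⟩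
  case pos =>
  set S : Set ℕ := {n | ∃ L : List V, (List.Chain' G.Adj L ∧ L.Nodup ∧
      ∃ (M : List V) (a b : V), L = M ++ [a, b] ∧ B a b) ∧ L.length = n} with hSdef
  have hSne : S.Nonempty := by
    obtain ⟨L, hL⟩ := hS; exact ⟨L.length, L, hL, rfl⟩
  have hSbdd : BddAbove S := by
    refine ⟨Fintype.card V, fun n hn => ?_⟩
    obtain ⟨L, ⟨_, hnod, _⟩, rfl⟩ := hn
    exact hnod.length_le_card
  obtain ⟨L, ⟨hLc, hLn, M, c, d, hLdec, hcd⟩, hLlen⟩ := Nat.sSup_mem hSne hSbdd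
  have hLM : L.length = M.length + 2 := by rw [hLdec]; simp
  refine ⟨d, ?_⟩
  intro P hP2 hPc hPn hPh hPB
  obtain ⟨q₁, P₁, rfl⟩ := List.exists_cons_of_ne_nil
    (show P ≠ [] by intro h; rw [h] at hP2; simp at hP2)
  obtain ⟨q₂, P', rfl⟩ := List.exists_cons_of_ne_nil
    (show P₁ ≠ [] by intro h; rw [h] at hP2; simp at hP2)
  have hq1 : d = q₁ := (by simpa using hPh : q₁ = d).symm
  subst hq1
  by_cases hq2 : q₂ = c
  case pos =>
    refine hno ⟨d :: q₂ :: P', hP2, hPc, hPn, ?_, hPB⟩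
    simpa [hq2] using hcd
  case neg =>
  -- disjointness of the tail of P from L
  have hLlast : L.getLast? = some d := by
    rw [hLdec, List.getLast?_append] <;> simp
  have hdisj : ∀ x ∈ (q₂ :: P'), x ∉ L := by
    intro x hx hxL
    obtain ⟨s', hs', hxs⟩ := List.getElem_of_mem hx
    obtain ⟨t, ht, hxt⟩ := List.getElem_of_mem hxL
    have htne : t ≠ L.length - 1 := by
      intro ht1
      have hxd : x = d := by
        rw [← hxt]
        have h1 : L[t]'ht = (M ++ [c, d])[t]'(by rw [← hLdec]; exact ht) :=
          List.getElem_of_eq hLdec ht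
        rw [h1]
        exact getElem_pair₂ M c d t (by omega) _
      exact (List.nodup_cons.mp hPn).1 (hxd ▸ hx)
    have ht2 : t ≤ L.length - 2 := by omega
    -- two paths from d to x
    have hPlen : s' < P'.length + 1 := by simpa using hs'
    have hQ1c : ((d :: q₂ :: P').take (s' + 2)).Chain' G.Adj := hPc.take _
    have hQ1n : ((d :: q₂ :: P').take (s' + 2)).Nodup :=
      hPn.sublist (List.take_sublist _ _)
    have hQ1h : ((d :: q₂ :: P').take (s' + 2)).head? = some d := by
      simp [List.take_succ_cons]
    have hQ1l : ((d :: q₂ :: P').take (s' + 2)).getLast? = some x := by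
      rw [List.getLast?_eq_getElem?]
      have hlen : ((d :: q₂ :: P').take (s' + 2)).length = s' + 2 := by
        simp; omega
      rw [hlen]
      show ((d :: q₂ :: P').take (s' + 2))[s' + 1]? = some x
      rw [List.getElem?_take_of_lt (by omega)]
      simp only [List.getElem?_cons_succ]
      rw [List.getElem?_eq_getElem hs', hxs]
    have hR1c : ((L.drop t).reverse).Chain' G.Adj := by
      rw [show @List.Chain' V = List.IsChain from rfl, List.isChain_reverse]
      exact (hLc.drop t).imp (fun a b hab => hab.symm)
    have hR1n : ((L.drop t).reverse).Nodup :=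
      List.nodup_reverse.mpr (hLn.sublist (List.drop_sublist _ _))
    have hR1h : ((L.drop t).reverse).head? = some d := by
      rw [List.head?_reverse, List.getLast?_drop, if_neg (by omega)]
      exact hLlast
    have hR1l : ((L.drop t).reverse).getLast? = some x := by
      rw [List.getLast?_reverse, List.head?_drop]
      rw [List.getElem?_eq_getElem ht, hxt]
    have heq := tree_path_unique hT hQ1c hQ1n hQ1h hQ1l hR1c hR1n hR1h hR1l
    have h1 : ((d :: q₂ :: P').take (s' + 2))[1]? = some q₂ := by
      rw [List.getElem?_take_of_lt (by omega)]
      simp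
    have h2 : ((L.drop t).reverse)[1]? = some c := by
      have hdl : (L.drop t).length = L.length - t := by simp
      rw [List.getElem?_reverse (by omega)]
      rw [hdl]
      rw [List.getElem?_drop]
      have hidx : t + (L.length - t - 1 - 1) = M.length := by omega
      rw [hidx]
      rw [hLdec, List.getElem?_eq_getElem (by simp), getElem_pair₁ M c d _ rfl]
    rw [heq, h2] at h1
    exact hq2 (Option.some.inj h1).symm
  -- build the longer path N = L ++ (q₂ :: P')
  have hNchain : (L ++ (q₂ :: P')).Chain' G.Adj := by
    rw [show @List.Chain' V = List.IsChain from rfl, List.isChain_append]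
    refine ⟨hLc, (List.isChain_cons_cons.mp hPc).2, ?_⟩
    intro x hx y hy
    rw [hLlast] at hx
    simp only [List.head?_cons, Option.mem_def, Option.some.injEq] at hx hy
    rw [← hx, ← hy]
    exact (List.isChain_cons_cons.mp hPc).1
  have hNnodup : (L ++ (q₂ :: P')).Nodup := by
    rw [List.nodup_append]
    exact ⟨hLn, (List.nodup_cons.mp hPn).2, fun a haL b hbP hab => hdisj b hbP (hab ▸ haL)⟩
  have hPB' := end_bumper_decomp (d :: q₂ :: P') hP2 hPB
  obtain ⟨Q, a, b, hPdec, hab⟩ := hPB'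
  have hNdec : ∃ (N₀ : List V) (e f : V), L ++ (q₂ :: P') = N₀ ++ [e, f] ∧ B e f := by
    cases Q with
    | nil =>
      simp only [List.nil_append, List.cons.injEq] at hPdec
      obtain ⟨rfl, rfl, rfl⟩ := hPdec
      exact ⟨M ++ [c], d, q₂, by rw [hLdec]; simp, hab⟩
    | cons g Q' =>
      simp only [List.cons_append, List.cons.injEq] at hPdec
      obtain ⟨rfl, htail⟩ := hPdec
      exact ⟨L ++ Q', a, b, by rw [htail]; simp, hab⟩
  have hmem : (L ++ (q₂ :: P')).length ∈ S := ⟨_, ⟨hNchain, hNnodup, hNdec⟩, rfl⟩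
  have hle : (L ++ (q₂ :: P')).length ≤ sSup S := le_csSup hSbdd hmem
  have hgt : L.length < (L ++ (q₂ :: P')).length := by simp
  omega
end

section
/- Let B₁ ∪ B₂ be a vertical alternation where |B₁| = |B₂| = m (B₁ and B₂ interleave in the horizontal direction, alternating columns). If S is a point set with intv_x(S ∩ (B₁ ∪ B₂)) ≤ t, then the densities d_i = |S ∩ B_i|/m satisfy |d₁ − d₂| ≤ t/m. -/
open PPM

/-! Index the alternation by `Fin (2 * m)`, so that `B₁` and `B₂` are the even and odd
positions. The signed sum `∑ (-1)^i` over the positions hit by `S` is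
`|S ∩ B₁| - |S ∩ B₂|`. The `x`-projection of `S ∩ (B₁ ∪ B₂)` is a disjoint union of `t`
intervals, and since the alternation is ordered by `x`, each interval pulls back to a run of
consecutive positions, whose signed sum is `0` or `±1`. -/

namespace PPM

open Finset

theorem abs_sum_Ico_neg_one_pow_le_one (a b : ℕ) : |∑ k ∈ Ico a b, (-1 : ℤ) ^ k| ≤ 1 := by
  rcases le_or_gt a b with hab | hba
  · rw [sum_Ico_eq_sub _ hab, neg_one_geom_sum, neg_one_geom_sum]
    split_ifs <;> norm_num
  · simp [Ico_eq_empty_of_le hba.le]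

theorem abs_sum_neg_one_pow_le_one_of_ordConnected {N : ℕ} (T : Finset (Fin N))
    (hT : (T : Set (Fin N)).OrdConnected) : |∑ i ∈ T, (-1 : ℤ) ^ (i : ℕ)| ≤ 1 := by
  rcases T.eq_empty_or_nonempty with rfl | hne
  · simp
  have hIcc : T = Icc (T.min' hne) (T.max' hne) := by
    ext k
    rw [mem_Icc]
    exact ⟨fun hk => ⟨T.min'_le k hk, T.le_max' k hk⟩,
      fun hk => hT.out (T.min'_mem hne) (T.max'_mem hne) hk⟩
  have hsum : ∑ i ∈ Icc (T.min' hne) (T.max' hne), (-1 : ℤ) ^ (i : ℕ)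
      = ∑ k ∈ Ico (T.min' hne : ℕ) (T.max' hne + 1), (-1 : ℤ) ^ k := by
    rw [Ico_add_one_right_eq_Icc, ← Fin.map_valEmbedding_Icc, sum_map]
    rfl
  rw [hIcc, hsum]
  exact abs_sum_Ico_neg_one_pow_le_one _ _

theorem exists_intervalicity_cover {n : ℕ} (A : Finset (Fin n)) :
    ∃ F : Finset (Finset (Fin n)), F.card = intervalicity A ∧
      (∀ I ∈ F, ∃ a b : Fin n, I = Icc a b) ∧
      (F : Set (Finset (Fin n))).PairwiseDisjoint id ∧ F.sup id = A := by
  refine Nat.sInf_mem (s := {m | ∃ F : Finset (Finset (Fin n)), F.card = m ∧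
    (∀ I ∈ F, ∃ a b : Fin n, I = Icc a b) ∧
    (F : Set (Finset (Fin n))).PairwiseDisjoint id ∧ F.sup id = A})
    ⟨_, A.map ⟨singleton, singleton_injective⟩, rfl, ?_, ?_, ?_⟩
  · simpa using fun a _ => ⟨a, a, (Icc_self a).symm⟩
  · simp only [coe_map, Set.PairwiseDisjoint, Set.Pairwise, Set.mem_image,
      Function.Embedding.coeFn_mk]
    rintro _ ⟨a, -, rfl⟩ _ ⟨b, -, rfl⟩ hab
    exact disjoint_singleton.mpr fun h => hab (h ▸ rfl)
  · ext x
    simp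

theorem abs_sum_neg_one_pow_filter_le_intervalicity {N n : ℕ} {g : Fin N → Fin n}
    (hg : Monotone g) (A : Finset (Fin n)) :
    |∑ i with g i ∈ A, (-1 : ℤ) ^ (i : ℕ)| ≤ intervalicity A := by
  obtain ⟨F, hcard, hIcc, hdisj, hsup⟩ := exists_intervalicity_cover A
  have hunion : ({i | g i ∈ A} : Finset (Fin N)) = F.biUnion fun I => {i | g i ∈ I} := by
    ext i
    simp [← hsup, mem_sup]
  have hdisj' : (F : Set (Finset (Fin n))).PairwiseDisjoint
      fun I => ({i | g i ∈ I} : Finset (Fin N)) :=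
    fun I hI J hJ hIJ => disjoint_left.mpr fun i hiI hiJ =>
      disjoint_left.mp (hdisj hI hJ hIJ) (mem_filter.mp hiI).2 (mem_filter.mp hiJ).2
  have hrun : ∀ I ∈ F, |∑ i with g i ∈ I, (-1 : ℤ) ^ (i : ℕ)| ≤ 1 := by
    intro I hI
    obtain ⟨a, b, rfl⟩ := hIcc I hI
    apply abs_sum_neg_one_pow_le_one_of_ordConnected
    simp only [coe_filter, mem_univ, true_and, mem_Icc]
    exact Set.ordConnected_Icc.preimage_mono hg
  calc |∑ i with g i ∈ A, (-1 : ℤ) ^ (i : ℕ)|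
      = |∑ I ∈ F, ∑ i with g i ∈ I, (-1 : ℤ) ^ (i : ℕ)| := by
        rw [hunion, sum_biUnion hdisj']
    _ ≤ ∑ I ∈ F, |∑ i with g i ∈ I, (-1 : ℤ) ^ (i : ℕ)| := abs_sum_le_sum_abs _ _
    _ ≤ ∑ _I ∈ F, 1 := sum_le_sum hrun
    _ = intervalicity A := by simp [hcard]

theorem sum_neg_one_pow_eq_card_filter_even_sub_card_filter_odd {ι : Type*} (J : Finset ι)
    (k : ι → ℕ) :
    ∑ i ∈ J, (-1 : ℤ) ^ k i = #{i ∈ J | Even (k i)} - #{i ∈ J | Odd (k i)} := by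
  simp_rw [neg_one_pow_eq_ite, sum_ite, sum_const, Nat.not_even_iff_odd]
  simp [sub_eq_add_neg]

theorem card_eq_card_filter_of_subset_image {ι β : Type*} [Fintype ι] [DecidableEq β]
    {f : ι → β} (hf : Function.Injective f) {X : Finset β} (hX : X ⊆ univ.image f) :
    #X = #{i | f i ∈ X} := by
  rw [← card_image_of_injective _ hf]
  congr 1
  ext x
  simp only [mem_image, mem_filter, mem_univ, true_and]
  constructor
  · intro hx
    obtain ⟨i, -, rfl⟩ := mem_image.mp (hX hx)
    exact ⟨i, hx, rfl⟩
  · rintro ⟨i, hi, rfl⟩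
    exact hi

theorem fst_mem_image_fst_inter_image_iff {ι α β : Type*} [Fintype ι] [DecidableEq α]
    [DecidableEq β] {f : ι → α × β} (hf : Function.Injective (Prod.fst ∘ f))
    (S : Finset (α × β)) (i : ι) :
    (f i).1 ∈ (S ∩ univ.image f).image Prod.fst ↔ f i ∈ S := by
  refine ⟨fun h => ?_, fun h => mem_image_of_mem _ (mem_inter.mpr ⟨h, by simp⟩)⟩
  obtain ⟨p, hp, hpi⟩ := mem_image.mp h
  obtain ⟨j, -, rfl⟩ := mem_image.mp (mem_inter.mp hp).2
  rw [← hf hpi]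
  exact (mem_inter.mp hp).1

end PPM

open Finset in
theorem density_propagation_general {n m : ℕ} (B₁ B₂ : Finset (Fin n × Fin n))
    (hdisj : Disjoint B₁ B₂)
    (f : Fin (2 * m) → Fin n × Fin n)
    (hmono : ∀ i j : Fin (2 * m), i < j → (f i).1 < (f j).1)
    (himg : Finset.univ.image f = B₁ ∪ B₂)
    (halt : ∀ i : Fin (2 * m), (Even i.val → f i ∈ B₁) ∧ (Odd i.val → f i ∈ B₂))
    (S : Finset (Fin n × Fin n)) (t : ℕ)
    (ht : intervalicity ((S ∩ (B₁ ∪ B₂)).image Prod.fst) ≤ t) :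
    |((S ∩ B₁).card : ℚ) / m - ((S ∩ B₂).card : ℚ) / m| ≤ (t : ℚ) / m := by
  have hx : StrictMono (Prod.fst ∘ f) := hmono
  have hf : Function.Injective f := hx.injective.of_comp
  have hB₁ (i : Fin (2 * m)) : f i ∈ B₁ ↔ Even (i : ℕ) :=
    ⟨fun h => Nat.not_odd_iff_even.mp fun ho => disjoint_left.mp hdisj h ((halt i).2 ho),
      (halt i).1⟩
  have hB₂ (i : Fin (2 * m)) : f i ∈ B₂ ↔ Odd (i : ℕ) :=
    ⟨fun h => Nat.not_even_iff_odd.mp fun he => disjoint_left.mp hdisj ((halt i).1 he) h,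
      (halt i).2⟩
  rw [← himg] at ht
  have hcard (B : Finset (Fin n × Fin n)) (hB : B ⊆ univ.image f) :
      #(S ∩ B) = #{i | f i ∈ S ∧ f i ∈ B} := by
    rw [card_eq_card_filter_of_subset_image hf (inter_subset_right.trans hB)]
    simp only [mem_inter]
  have hdiff : (#(S ∩ B₁) : ℤ) - #(S ∩ B₂) = ∑ i with f i ∈ S, (-1 : ℤ) ^ (i : ℕ) := by
    rw [sum_neg_one_pow_eq_card_filter_even_sub_card_filter_odd, filter_filter, filter_filter,
      hcard B₁ (himg ▸ subset_union_left), hcard B₂ (himg ▸ subset_union_right)]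
    simp only [hB₁, hB₂]
  have hsum := abs_sum_neg_one_pow_filter_le_intervalicity hx.monotone
    ((S ∩ univ.image f).image Prod.fst)
  simp only [Function.comp_apply, fst_mem_image_fst_inter_image_iff hx.injective] at hsum
  have hbound : |(#(S ∩ B₁) : ℚ) - #(S ∩ B₂)| ≤ t := by
    exact_mod_cast hdiff ▸ hsum.trans (Nat.cast_le.mpr ht)
  rw [← sub_div, abs_div, Nat.abs_cast]
  gcongr

/-- if `B₁ ∪ B₂` is an alternation of two `m`-point sets in the
horizontal direction and `intv_x(S ∩ (B₁ ∪ B₂)) ≤ t`, then the densities of `S` in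
`B₁` and `B₂` differ by at most `t/m`. -/
theorem density_propagation {n m : ℕ} (hm : 0 < m) (B₁ B₂ : Finset (Fin n × Fin n))
    (h1 : B₁.card = m) (h2 : B₂.card = m) (hdisj : Disjoint B₁ B₂)
    (f : Fin (2 * m) → Fin n × Fin n)
    (hmono : ∀ i j : Fin (2 * m), i < j → (f i).1 < (f j).1)
    (himg : Finset.univ.image f = B₁ ∪ B₂)
    (halt : ∀ i : Fin (2 * m), (Even i.val → f i ∈ B₁) ∧ (Odd i.val → f i ∈ B₂))
    (S : Finset (Fin n × Fin n)) (t : ℕ)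
    (ht : intervalicity ((S ∩ (B₁ ∪ B₂)).image Prod.fst) ≤ t) :
    |((S ∩ B₁).card : ℚ) / m - ((S ∩ B₂).card : ℚ) / m| ≤ (t : ℚ) / m :=
  density_propagation_general B₁ B₂ hdisj f hmono himg halt S t ht
end

section
/- Let π and σ be permutations of length n with the property that π equals the composition of σ with the depth-ordering of leaves of some caterpillar grid tree T; then for every i ∈ [n], the prefix set {(σ(1), π(σ(1))), …, (σ(i), π(σ(i)))} equals the leaf-label set of some vertex of T. Consequently pw^σ(π) ≤ gw^T(π). -/
open PPM

/-! In a caterpillar every internal vertex has a leaf child `a` and one further child `c`. A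
nonempty set `S` of leaves that contains every leaf deeper than one of its members either misses
`a`, and then lives in `c`, or contains `a`, which has depth `1`; then any leaf outside `S` has
depth at most `1`, so `c` is a single leaf and `S = {a}`. Hence such a set is the leaf set of a
vertex, and the `σ`-prefixes are sets of this kind. -/

namespace PPM.GTree

variable {α : Type}

theorem self_mem_subtrees (T : GTree α) : T ∈ T.subtrees := by
  cases T <;> simp [subtrees]

def IsLeafExtension (T c : GTree α) (a : α) : Prop :=
  T = node (leaf a) c ∨ T = node c (leaf a)

namespace IsLeafExtension

variable {T c : GTree α} {a : α}

theorem mem_leafList_iff (h : IsLeafExtension T c a) {x : α} :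
    x ∈ T.leafList ↔ x = a ∨ x ∈ c.leafList := by
  rcases h with rfl | rfl <;> simp [leafList, or_comm]

theorem notMem_leafList (h : IsLeafExtension T c a) (hnd : T.leafList.Nodup) :
    a ∉ c.leafList := by
  rcases h with rfl | rfl
  · simp only [leafList, List.singleton_append, List.nodup_cons] at hnd
    exact hnd.1
  · simp only [leafList, List.nodup_append] at hnd
    exact fun ha => hnd.2.2 a ha a (List.mem_singleton_self a) rfl

theorem nodup (h : IsLeafExtension T c a) (hnd : T.leafList.Nodup) : c.leafList.Nodup := by
  rcases h with rfl | rfl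
  exacts [hnd.of_append_right, hnd.of_append_left]

theorem leaf_mem_subtrees (h : IsLeafExtension T c a) : leaf a ∈ T.subtrees := by
  rcases h with rfl | rfl <;> simp [subtrees]

theorem subtrees_subset (h : IsLeafExtension T c a) : c.subtrees ⊆ T.subtrees := by
  rcases h with rfl | rfl <;> intro t ht <;> simp [subtrees, ht]

variable [DecidableEq α]

theorem leafDepth_leaf (h : IsLeafExtension T c a) (hnd : T.leafList.Nodup) :
    T.leafDepth a = 1 := by
  have ha := h.notMem_leafList hnd
  rcases h with rfl | rfl <;> simp [leafDepth, leafList, ha]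

theorem leafDepth_of_mem (h : IsLeafExtension T c a) (hnd : T.leafList.Nodup) {x : α}
    (hx : x ∈ c.leafList) : T.leafDepth x = c.leafDepth x + 1 := by
  have hxa : x ≠ a := fun hxa => h.notMem_leafList hnd (hxa ▸ hx)
  rcases h with rfl | rfl <;> simp [leafDepth, leafList, hx, hxa]

end IsLeafExtension

theorem IsCaterpillar.exists_isLeafExtension {l r : GTree α} (h : (node l r).IsCaterpillar) :
    ∃ a, (IsLeafExtension (node l r) r a ∧ r.IsCaterpillar) ∨
      (IsLeafExtension (node l r) l a ∧ l.IsCaterpillar) := by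
  obtain ⟨⟨a, rfl⟩ | ⟨a, rfl⟩, hl, hr⟩ := h
  exacts [⟨a, .inl ⟨.inl rfl, hr⟩⟩, ⟨a, .inr ⟨.inr rfl, hl⟩⟩]

variable [DecidableEq α]

theorem eq_leaf_of_leafDepth_eq_zero {c : GTree α} {y : α} (hy : y ∈ c.leafList)
    (h : c.leafDepth y = 0) : c = leaf y := by
  cases c with
  | leaf b => simp_all [leafList]
  | node l r => simp only [leafDepth] at h; split at h <;> omega

def DeeperClosed (T : GTree α) (S : Finset α) : Prop :=
  ∀ x ∈ S, ∀ y ∈ T.leafList, T.leafDepth x < T.leafDepth y → y ∈ S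

theorem IsLeafExtension.exists_mem_subtrees_of_deeperClosed {T c : GTree α} {a : α}
    (h : IsLeafExtension T c a) (hnd : T.leafList.Nodup)
    (ih : ∀ S : Finset α, S.Nonempty → S ⊆ c.leafList.toFinset → DeeperClosed c S →
      ∃ t ∈ c.subtrees, S = t.leafList.toFinset)
    {S : Finset α} (hne : S.Nonempty) (hS : S ⊆ T.leafList.toFinset) (hcl : DeeperClosed T S) :
    ∃ t ∈ T.subtrees, S = t.leafList.toFinset := by
  by_cases haS : a ∈ S
  · by_cases hfull : S = T.leafList.toFinset
    · exact ⟨T, T.self_mem_subtrees, hfull⟩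
    obtain ⟨y, hyT, hyS⟩ :=
      Finset.exists_of_ssubset (Finset.ssubset_iff_subset_ne.2 ⟨hS, hfull⟩)
    rw [List.mem_toFinset] at hyT
    have hyc : y ∈ c.leafList :=
      (h.mem_leafList_iff.1 hyT).resolve_left fun hya => hyS (hya ▸ haS)
    have hdepth : T.leafDepth y ≤ T.leafDepth a := not_lt.1 fun hlt => hyS (hcl a haS y hyT hlt)
    rw [h.leafDepth_leaf hnd, h.leafDepth_of_mem hnd hyc] at hdepth
    have hc : c = leaf y := eq_leaf_of_leafDepth_eq_zero hyc (by omega)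
    refine ⟨leaf a, h.leaf_mem_subtrees, ?_⟩
    suffices S = {a} by simpa [leafList]
    refine Finset.eq_singleton_iff_unique_mem.2 ⟨haS, fun x hx => ?_⟩
    have hxT := h.mem_leafList_iff.1 (List.mem_toFinset.1 (hS hx))
    rw [hc, leafList, List.mem_singleton] at hxT
    exact hxT.resolve_right fun hxy => hyS (hxy ▸ hx)
  · have hSc : S ⊆ c.leafList.toFinset := fun x hx => by
      have hxT := h.mem_leafList_iff.1 (List.mem_toFinset.1 (hS hx))
      exact List.mem_toFinset.2 (hxT.resolve_left fun hxa => haS (hxa ▸ hx))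
    have hclc : DeeperClosed c S := fun x hx y hy hlt => by
      have hxc := List.mem_toFinset.1 (hSc hx)
      refine hcl x hx y (h.mem_leafList_iff.2 (.inr hy)) ?_
      rw [h.leafDepth_of_mem hnd hxc, h.leafDepth_of_mem hnd hy]
      omega
    obtain ⟨t, ht, hSt⟩ := ih S hne hSc hclc
    exact ⟨t, h.subtrees_subset ht, hSt⟩

theorem IsCaterpillar.exists_mem_subtrees_of_deeperClosed {T : GTree α} (hcat : T.IsCaterpillar)
    (hnd : T.leafList.Nodup) {S : Finset α} (hne : S.Nonempty) (hS : S ⊆ T.leafList.toFinset)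
    (hcl : DeeperClosed T S) : ∃ t ∈ T.subtrees, S = t.leafList.toFinset := by
  induction T generalizing S with
  | leaf b =>
    refine ⟨leaf b, self_mem_subtrees _, Finset.eq_of_subset_of_card_le hS ?_⟩
    simpa [leafList] using hne
  | node l r ihl ihr =>
    obtain ⟨a, ⟨hext, hc⟩ | ⟨hext, hc⟩⟩ := hcat.exists_isLeafExtension
    · exact hext.exists_mem_subtrees_of_deeperClosed hnd
        (fun _ => ihr hc (hext.nodup hnd)) hne hS hcl
    · exact hext.exists_mem_subtrees_of_deeperClosed hnd
        (fun _ => ihl hc (hext.nodup hnd)) hne hS hcl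

end PPM.GTree

namespace PPM

theorem gridComplexity_le_treeGW {n : ℕ} {T t : GTree (Fin n × Fin n)} (ht : t ∈ T.subtrees) :
    gridComplexity t.leafList.toFinset ≤ treeGW T :=
  List.le_max_of_le' 0 (List.mem_map_of_mem ht) le_rfl

theorem mem_prefixSet {n : ℕ} {π σ : Equiv.Perm (Fin n)} {i : Fin n} {x : Fin n × Fin n} :
    x ∈ prefixSet π σ i ↔ ∃ j ≤ i, (σ j, π (σ j)) = x := by
  simp [prefixSet]

theorem mk_mem_prefixSet_iff {n : ℕ} {π σ : Equiv.Perm (Fin n)} {i j : Fin n} :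
    (σ j, π (σ j)) ∈ prefixSet π σ i ↔ j ≤ i := by
  simp [prefixSet]

theorem prefixSet_subset_diagram {n : ℕ} (π σ : Equiv.Perm (Fin n)) (i : Fin n) :
    prefixSet π σ i ⊆ diagram π := by
  intro x hx
  obtain ⟨j, -, rfl⟩ := mem_prefixSet.1 hx
  simp [diagram]

theorem prefixSet_deeperClosed {n : ℕ} {π σ : Equiv.Perm (Fin n)} {T : GTree (Fin n × Fin n)}
    (hT : IsGridTree π T)
    (hσ : ∀ i j : Fin n, i ≤ j →
      T.leafDepth (σ j, π (σ j)) ≤ T.leafDepth (σ i, π (σ i))) (i : Fin n) :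
    T.DeeperClosed (prefixSet π σ i) := by
  intro x hx y hy hlt
  obtain ⟨j, hji, rfl⟩ := mem_prefixSet.1 hx
  have hyπ : y ∈ diagram π := hT.2 ▸ List.mem_toFinset.2 hy
  obtain ⟨m, rfl⟩ : ∃ m, (m, π m) = y := by simpa [diagram] using hyπ
  rw [← σ.apply_symm_apply m] at hlt ⊢
  rw [mk_mem_prefixSet_iff]
  by_contra! him
  exact hlt.not_ge (hσ j _ (hji.trans him.le))

end PPM

/-- if `σ` orders the points of `π` by decreasing depth of their leaves
in a caterpillar grid tree `T`, then every `σ`-prefix set is the leaf-label set of a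
vertex of `T`; consequently `pw^σ(π) ≤ gw^T(π)`. -/
theorem caterpillar_prefixes_are_subtrees {n : ℕ} (π σ : Equiv.Perm (Fin n))
    (T : GTree (Fin n × Fin n)) (hT : IsGridTree π T) (hcat : T.IsCaterpillar)
    (hσ : ∀ i j : Fin n, i ≤ j →
      T.leafDepth (σ j, π (σ j)) ≤ T.leafDepth (σ i, π (σ i))) :
    (∀ i : Fin n, ∃ t ∈ T.subtrees, prefixSet π σ i = t.leafList.toFinset) ∧
    pwOrd π σ ≤ treeGW T := by
  have hprefix (i : Fin n) : ∃ t ∈ T.subtrees, prefixSet π σ i = t.leafList.toFinset :=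
    hcat.exists_mem_subtrees_of_deeperClosed hT.1 ⟨_, mk_mem_prefixSet_iff.2 le_rfl⟩
      (hT.2 ▸ prefixSet_subset_diagram π σ i) (prefixSet_deeperClosed hT hσ i)
  refine ⟨hprefix, Finset.sup_le fun i _ => ?_⟩
  obtain ⟨t, ht, hit⟩ := hprefix i
  exact hit ▸ gridComplexity_le_treeGW ht
end
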